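/- arXiv:2110.01520 — 3 statements merged into one kernel-verified Lean document; each statement's English description precedes it below -/
import Mathlib

section
/- Let G be a finite group in which every two abelian p-subgroups of equal order are conjugate (for every prime p). If P is a Sylow p-subgroup of G for an odd prime p and P is non-cyclic, and P contains an element of order p^2, then P contains exactly one subgroup of order p. -/
open Subgroup

/-- A finite group is in the class `A_pi` if for every prime `p`, any two abelian
`p`-subgroups of equal order are conjugate. -/
def IsApi (G : Type*) [Group G] : Prop :=
  ∀ p : ℕ, p.Prime → ∀ X Y : Subgroup G, IsPGroup p X → IsPGroup p Y →
    IsMulCommutative X → IsMulCommutative Y → Nat.card X = Nat.card Y →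
    ∃ g : G, X.map (MulAut.conj g).toMonoidHom = Y

/-! The center of the nontrivial `p`-group `P` contains an element `z` of order `p`. If some
`A ≤ P` of order `p` missed `z`, then `A` and the central element `z` would generate an abelian
subgroup of exponent `p` and order at least `p ^ 2`. A subgroup of it of order `p ^ 2` is, by the
`A_pi` property, conjugate to the cyclic group generated by an element of order `p ^ 2`, which is
absurd. Hence `⟨z⟩` is the only subgroup of order `p`. -/

section

variable {G : Type*} [Group G] {p : ℕ}

theorem Subgroup.pow_eq_one_of_mem_closure {s : Set G} {n : ℕ}
    (hcomm : ∀ x ∈ s, ∀ y ∈ s, x * y = y * x) (hs : ∀ x ∈ s, x ^ n = 1) {y : G}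
    (hy : y ∈ closure s) : y ^ n = 1 := by
  have := isMulCommutative_closure hcomm
  induction hy using Subgroup.closure_induction with
  | mem x hx => exact hs x hx
  | one => exact one_pow n
  | mul x y hx hy ihx ihy =>
    have hxy : Commute x y := setLike_mul_comm hx hy
    rw [hxy.mul_pow, ihx, ihy, one_mul]
  | inv x _ ih => rw [inv_pow, ih, inv_one]

theorem IsPGroup.exists_orderOf_eq_prime_forall_commute [Finite G] [Fact p.Prime]
    {Q : Subgroup G} (hQ : IsPGroup p Q) (hQ1 : Q ≠ ⊥) :
    ∃ z ∈ Q, orderOf z = p ∧ ∀ g ∈ Q, Commute z g := by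
  have := (nontrivial_iff_ne_bot Q).mpr hQ1
  have hZ := hQ.center_nontrivial
  obtain ⟨k, hk, hcard⟩ := ((hQ.to_subgroup (center Q)).nontrivial_iff_card).mp hZ
  obtain ⟨ζ, hζ⟩ := exists_prime_orderOf_dvd_card' (G := center Q) p
    (hcard ▸ dvd_pow_self p hk.ne')
  refine ⟨ζ.1.1, ζ.1.2, by rw [← hζ, orderOf_coe, orderOf_coe], fun g hg => ?_⟩
  exact congrArg Subtype.val (mem_center_iff.mp ζ.2 ⟨g, hg⟩) |>.symm

theorem IsPGroup.sq_le_card_of_lt [Fact p.Prime] {H K : Subgroup G} [Finite K]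
    (hK : IsPGroup p K) (hHK : H < K) (hH : Nat.card H = p) : p ^ 2 ≤ Nat.card K := by
  obtain ⟨k, hk⟩ := hK.exists_card_eq
  have hlt : Nat.card H < Nat.card K := lt_of_le_of_ne (card_le_of_le hHK.le)
    fun h => hHK.ne (eq_of_le_of_card_ge hHK.le h.ge)
  have hp : p.Prime := Fact.out
  rw [hk]
  exact Nat.pow_le_pow_right hp.pos
    ((Nat.pow_lt_pow_iff_right hp.one_lt).mp (by rw [hH, hk] at hlt; rwa [pow_one]))

theorem IsApi.exists_mem_orderOf_eq (hG : IsApi G) (hp : p.Prime) {n : ℕ} {x : G}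
    (hx : orderOf x = p ^ n) {X : Subgroup G} (hXp : IsPGroup p X) [IsMulCommutative X]
    (hX : p ^ n ≤ Nat.card X) : ∃ y ∈ X, orderOf y = p ^ n := by
  obtain ⟨S, hS⟩ := Sylow.exists_subgroup_card_pow_prime_of_le_card hp hXp hX
  have hSX : S.map X.subtype ≤ X := map_subtype_le S
  have hScard : Nat.card (S.map X.subtype) = p ^ n := by
    rw [← hS]
    exact (Nat.card_congr (S.equivMapOfInjective X.subtype X.subtype_injective).toEquiv).symm
  have hxcard : Nat.card (zpowers x) = p ^ n := by rw [Nat.card_zpowers, hx]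
  obtain ⟨g, hg⟩ := hG p hp _ (zpowers x) (hXp.to_le hSX) (IsPGroup.of_card hxcard)
    inferInstance inferInstance (hScard.trans hxcard.symm)
  obtain ⟨y, hyS, hyx⟩ := mem_map.mp (hg ▸ mem_zpowers x)
  refine ⟨y, hSX hyS, ?_⟩
  rw [← hx, ← hyx, MulEquiv.coe_toMonoidHom, MulEquiv.orderOf_eq]

theorem IsApi.mem_of_card_eq_prime [Finite G] (hG : IsApi G) (hp : p.Prime) {x : G}
    (hx : orderOf x = p ^ 2) {Q : Subgroup G} (hQ : IsPGroup p Q) {z : G} (hzQ : z ∈ Q)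
    (hz : orderOf z = p) (hzc : ∀ g ∈ Q, Commute z g) {A : Subgroup G} (hAQ : A ≤ Q)
    (hA : Nat.card A = p) : z ∈ A := by
  have : Fact p.Prime := ⟨hp⟩
  by_contra hzA
  set X := closure ((A : Set G) ∪ {z})
  have hcomm : ∀ u ∈ (A : Set G) ∪ {z}, ∀ v ∈ (A : Set G) ∪ {z}, u * v = v * u := by
    have := isCyclic_of_prime_card hA
    rintro u (hu | rfl) v (hv | rfl)
    · exact setLike_mul_comm hu hv
    · exact (hzc u (hAQ hu)).symm
    · exact hzc v (hAQ hv)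
    · rfl
  have hexp : ∀ u ∈ X, u ^ p = 1 := by
    refine fun u hu => pow_eq_one_of_mem_closure hcomm ?_ hu
    rintro v (hv | rfl)
    · simpa [hA] using (pow_card_eq_one' : (⟨v, hv⟩ : A) ^ Nat.card A = 1)
    · rw [← hz, pow_orderOf_eq_one]
  have hAX : A < X :=
    lt_of_le_of_ne (subset_closure.trans' Set.subset_union_left) fun h =>
      hzA (h ▸ subset_closure (Set.mem_union_right _ rfl))
  have hXp : IsPGroup p X :=
    hQ.to_le ((closure_le _).mpr (Set.union_subset hAQ (Set.singleton_subset_iff.mpr hzQ)))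
  have := isMulCommutative_closure hcomm
  obtain ⟨y, hyX, hy⟩ := hG.exists_mem_orderOf_eq hp hx hXp (hXp.sq_le_card_of_lt hAX hA)
  have hdvd : p ^ 2 ∣ p ^ 1 := by rw [← hy, pow_one]; exact orderOf_dvd_of_pow_eq_one (hexp y hyX)
  exact absurd ((Nat.pow_dvd_pow_iff_le_right hp.one_lt).mp hdvd) (by norm_num)

end

theorem stmt0_general (G : Type*) [Group G] [Finite G] (hG : IsApi G)
    (p : ℕ) (hp : p.Prime)
    (P : Sylow p G)
    (hx : ∃ x : G, x ∈ (P : Subgroup G) ∧ orderOf x = p ^ 2) :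
    ∃! H : Subgroup G, H ≤ (P : Subgroup G) ∧ Nat.card H = p := by
  have : Fact p.Prime := ⟨hp⟩
  obtain ⟨x, hxP, hx⟩ := hx
  have hP : (P : Subgroup G) ≠ ⊥ := fun h => by
    rw [h, mem_bot] at hxP
    rw [hxP, orderOf_one] at hx
    exact (Nat.one_lt_pow two_ne_zero hp.one_lt).ne hx
  obtain ⟨z, hzP, hz, hzc⟩ := P.isPGroup'.exists_orderOf_eq_prime_forall_commute hP
  have hzcard : Nat.card (zpowers z) = p := by rw [Nat.card_zpowers, hz]
  refine ⟨zpowers z, ⟨zpowers_le.mpr hzP, hzcard⟩, fun A ⟨hAP, hA⟩ => ?_⟩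
  have hzA := hG.mem_of_card_eq_prime hp hx P.isPGroup' hzP hz hzc hAP hA
  exact (eq_of_le_of_card_ge (zpowers_le.mpr hzA) (by rw [hA, hzcard])).symm

/-- If `G ∈ A_π`, `p` is an odd prime dividing `|G|`, and a Sylow `p`-subgroup `P` of `G`
is non-cyclic and contains an element of order `p ^ 2`, then `P` contains exactly one
subgroup of order `p`. -/
theorem stmt0 (G : Type*) [Group G] [Finite G] (hG : IsApi G)
    (p : ℕ) (hp : p.Prime) (hodd : Odd p) (hdvd : p ∣ Nat.card G)
    (P : Sylow p G) (hnc : ¬ IsCyclic (P : Subgroup G))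
    (hx : ∃ x : G, x ∈ (P : Subgroup G) ∧ orderOf x = p ^ 2) :
    ∃! H : Subgroup G, H ≤ (P : Subgroup G) ∧ Nat.card H = p :=
  stmt0_general G hG p hp P hx
end

section
/- Let G be a finite group and suppose N₁ and N₂ are normal subgroups of G with coprime orders. If both G/N₁ and G/N₂ have the property that any two abelian subgroups of equal prime-power order are conjugate, then G also has this property. -/
/-!
Fix a prime `p`; by coprimality `p` does not divide `|N|` for `N = N₁` or `N = N₂`. Then a
`p`-subgroup meets `N` trivially, so two abelian `p`-subgroups `X`, `Y` of equal order have images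
of equal order in `G ⧸ N`, which are conjugate there. After conjugating, `X ≤ YN`, and
`[YN : Y] = [N : Y ∩ N]` is prime to `p`, so `X` and `Y` are Sylow subgroups of `YN` and hence
conjugate.
-/

open Subgroup

open Pointwise

section

variable {G : Type*} [Group G]

namespace Subgroup

theorem relIndex_sup_of_normal [Finite G] (H K : Subgroup G) [K.Normal] :
    H.relIndex (H ⊔ K) = H.relIndex K := by
  have hH := relIndex_inf_mul_relIndex H K (H ⊔ K)
  have hK := relIndex_inf_mul_relIndex K H (H ⊔ K)
  rw [inf_of_le_left le_sup_right, relIndex_sup_right] at hH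
  rw [inf_of_le_left le_sup_left, inf_comm, ← hH] at hK
  exact Nat.eq_of_mul_eq_mul_left (Nat.pos_of_dvd_of_pos (relIndex_dvd_card K H) Nat.card_pos)
    (hK.trans (mul_comm _ _))

theorem map_conj_eq_smul (g : G) (H : Subgroup G) :
    H.map (MulAut.conj g).toMonoidHom = MulAut.conj g • H :=
  rfl

theorem map_conj_map {G' : Type*} [Group G'] (f : G →* G') (g : G) (H : Subgroup G) :
    (H.map f).map (MulAut.conj (f g)).toMonoidHom = (H.map (MulAut.conj g).toMonoidHom).map f := by
  simp only [map_map]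
  congr 1
  ext x
  simp

end Subgroup

namespace IsPGroup

variable {p : ℕ} [Fact p.Prime]

theorem card_map_of_not_dvd_card_ker [Finite G] {G' : Type*} [Group G'] {X : Subgroup G}
    (hX : IsPGroup p X) {f : G →* G'} (hf : ¬ p ∣ Nat.card f.ker) :
    Nat.card (X.map f) = Nat.card X := by
  obtain ⟨n, hn⟩ := IsPGroup.iff_card.mp hX
  have hcop : (Nat.card f.ker).Coprime (Nat.card X) := by
    rw [hn]
    exact Nat.Coprime.pow_right n ((Nat.Prime.coprime_iff_not_dvd Fact.out).mpr hf).symm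
  rw [← relIndex_ker, ← inf_relIndex_right, disjoint_iff.mp (disjoint_of_coprime_natCard hcop),
    relIndex_bot_left]

theorem exists_conj_eq_of_not_dvd_relIndex [Finite G] {K X Y : Subgroup G}
    (hX : IsPGroup p X) (hY : IsPGroup p Y) (hXK : X ≤ K) (hYK : Y ≤ K)
    (hcard : Nat.card X = Nat.card Y) (hindex : ¬ p ∣ Y.relIndex K) :
    ∃ k ∈ K, MulAut.conj k • X = Y := by
  have hindex' : ¬ p ∣ X.relIndex K := by
    have hXY : X.relIndex K = Y.relIndex K := by
      have h := relIndex_mul_relIndex ⊥ X K bot_le hXK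
      rw [← relIndex_mul_relIndex ⊥ Y K bot_le hYK, relIndex_bot_left, relIndex_bot_left,
        hcard] at h
      exact Nat.eq_of_mul_eq_mul_left Nat.card_pos h
    rwa [hXY]
  let SX := (hX.comap_subtype (K := K)).toSylow hindex'
  let SY := (hY.comap_subtype (K := K)).toSylow hindex
  obtain ⟨k, hk⟩ := MulAction.exists_smul_eq K SX SY
  have hk' : (MulAut.conj (k : G) • X).subgroupOf K = Y.subgroupOf K := by
    rw [← conj_smul_subgroupOf hXK]
    exact congrArg Sylow.toSubgroup hk
  refine ⟨k, k.2, ?_⟩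
  rw [subgroupOf_inj, inf_of_le_left (conj_smul_le_of_le hXK k), inf_of_le_left hYK] at hk'
  exact hk'

theorem exists_conj_eq_of_isApi_quotient [Finite G] {N : Subgroup G} [N.Normal]
    (hN : IsApi (G ⧸ N)) (hpN : ¬ p ∣ Nat.card N) {X Y : Subgroup G}
    (hX : IsPGroup p X) (hY : IsPGroup p Y) [IsMulCommutative X] [IsMulCommutative Y]
    (hcard : Nat.card X = Nat.card Y) : ∃ g : G, MulAut.conj g • X = Y := by
  let f := QuotientGroup.mk' N
  have hker : ¬ p ∣ Nat.card f.ker := by rwa [QuotientGroup.ker_mk']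
  obtain ⟨q, hq⟩ := hN p Fact.out (X.map f) (Y.map f) (hX.map f) (hY.map f) inferInstance
    inferInstance (by rw [hX.card_map_of_not_dvd_card_ker hker,
      hY.card_map_of_not_dvd_card_ker hker, hcard])
  obtain ⟨g, rfl⟩ := QuotientGroup.mk'_surjective N q
  have hle : MulAut.conj g • X ≤ Y ⊔ N := by
    rw [← QuotientGroup.ker_mk' N, ← Subgroup.map_le_map_iff, ← map_conj_eq_smul,
      ← map_conj_map, hq]
  have hgX : IsPGroup p (MulAut.conj g • X :) := hX.map _
  have hcard' : Nat.card (MulAut.conj g • X :) = Nat.card Y := by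
    rw [← map_conj_eq_smul, card_map_of_injective (MulAut.conj g).injective, hcard]
  have hindex : ¬ p ∣ Y.relIndex (Y ⊔ N) := by
    rw [relIndex_sup_of_normal]
    exact fun h ↦ hpN (h.trans (relIndex_dvd_card Y N))
  obtain ⟨k, -, hk⟩ :=
    hgX.exists_conj_eq_of_not_dvd_relIndex hY hle le_sup_left hcard' hindex
  exact ⟨k * g, by rw [map_mul, mul_smul, hk]⟩

end IsPGroup

end

/-- If `N₁, N₂ ⊴ G` have coprime orders and both `G ⧸ N₁` and `G ⧸ N₂` lie in `A_π`,
then so does `G`. -/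
theorem stmt2 (G : Type*) [Group G] [Finite G]
    (N₁ N₂ : Subgroup G) [N₁.Normal] [N₂.Normal]
    (hcop : Nat.Coprime (Nat.card N₁) (Nat.card N₂))
    (h₁ : IsApi (G ⧸ N₁)) (h₂ : IsApi (G ⧸ N₂)) :
    IsApi G := by
  intro p hp X Y hX hY _ _ hcard
  have : Fact p.Prime := ⟨hp⟩
  have hpN : ¬ p ∣ Nat.card N₁ ∨ ¬ p ∣ Nat.card N₂ :=
    not_and_or.mp fun h ↦ hp.ne_one (Nat.eq_one_of_dvd_coprimes hcop h.1 h.2)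
  rcases hpN with hpN₁ | hpN₂
  · exact hX.exists_conj_eq_of_isApi_quotient h₁ hpN₁ hY hcard
  · exact hX.exists_conj_eq_of_isApi_quotient h₂ hpN₂ hY hcard
end

section
/- Let p be an odd prime and P a finite p-group with a unique subgroup of order p. Then P is cyclic. -/
/-!
Induction on `|P|`. Every nontrivial subgroup of `P` contains the unique subgroup `C` of order `p`,
so it inherits the hypothesis, and all proper subgroups are cyclic. A noncyclic `P` then has two
maximal subgroups `M ≠ N`; both are normal of index `p`, so all commutators and `p`-th powers lie
in `M ⊓ N`, and `M ⊓ N` is central because the abelian groups `M` and `N` generate `P`. For odd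
`p` the identity `(ab)^p = [b,a]^(p choose 2) a^p b^p` with `[b,a]^p = [b^p,a] = 1` makes
`x ↦ x^p` a homomorphism. Its kernel lies in `C` and its image in `M ⊓ N`, of index `> p`, so
`|P| < |P|`.
-/

open Subgroup
open scoped commutatorElement

section

variable {G : Type*} [Group G]

section CommutatorCentral

variable {a b : G}

theorem commutatorElement_pow_left_of_commute (hb : Commute ⁅b, a⁆ b) (n : ℕ) :
    ⁅b ^ n, a⁆ = ⁅b, a⁆ ^ n := by
  induction n with
  | zero => simp
  | succ n ih =>
    calc ⁅b ^ (n + 1), a⁆ = b * ⁅b ^ n, a⁆ * (a * b⁻¹ * a⁻¹) := by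
          simp only [commutatorElement_def, pow_succ', mul_inv_rev, mul_assoc, inv_mul_cancel_left]
      _ = ⁅b, a⁆ ^ n * ⁅b, a⁆ := by
          rw [ih, ← mul_assoc, ← (hb.pow_left n).eq, commutatorElement_def]; group
      _ = ⁅b, a⁆ ^ (n + 1) := (pow_succ _ n).symm

theorem mul_pow_eq_commutatorElement_pow_mul (ha : Commute ⁅b, a⁆ a) (hb : Commute ⁅b, a⁆ b)
    (n : ℕ) : (a * b) ^ n = ⁅b, a⁆ ^ n.choose 2 * a ^ n * b ^ n := by
  induction n with
  | zero => simp
  | succ n ih =>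
    have hswap : b ^ n * a = ⁅b, a⁆ ^ n * a * b ^ n := by
      rw [← commutatorElement_pow_left_of_commute hb, commutatorElement_def]; group
    calc (a * b) ^ (n + 1) = ⁅b, a⁆ ^ n.choose 2 * a ^ n * (b ^ n * a) * b := by
          rw [pow_succ, ih]; group
      _ = ⁅b, a⁆ ^ n.choose 2 * (a ^ n * ⁅b, a⁆ ^ n) * a * (b ^ n * b) := by
          rw [hswap]; group
      _ = ⁅b, a⁆ ^ (n + 1).choose 2 * a ^ (n + 1) * b ^ (n + 1) := by
          rw [← ((ha.pow_pow n n).eq), Nat.choose_succ_succ', Nat.choose_one_right, pow_add,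
            pow_succ a, pow_succ b]
          group

theorem mul_pow_of_odd {n : ℕ} (hn : Odd n) (ha : Commute ⁅b, a⁆ a)
    (hb : Commute ⁅b, a⁆ b) (hab : Commute (b ^ n) a) : (a * b) ^ n = a ^ n * b ^ n := by
  obtain ⟨k, rfl⟩ := hn
  have hchoose : (2 * k + 1).choose 2 = (2 * k + 1) * k := by
    rw [Nat.choose_two_right, Nat.add_sub_cancel, mul_left_comm, Nat.mul_div_cancel_left _ two_pos]
  rw [mul_pow_eq_commutatorElement_pow_mul ha hb, hchoose, pow_mul,
    ← commutatorElement_pow_left_of_commute hb, commutatorElement_eq_one_iff_commute.mpr hab,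
    one_pow, one_mul]

end CommutatorCentral

theorem Subgroup.inf_le_center_of_sup_eq_top {M N : Subgroup G} [IsMulCommutative M]
    [IsMulCommutative N] (h : M ⊔ N = ⊤) : M ⊓ N ≤ center G := by
  have hM : M ≤ centralizer (M ⊓ N : Subgroup G) :=
    (le_centralizer M).trans (centralizer_le inf_le_left)
  have hN : N ≤ centralizer (M ⊓ N : Subgroup G) :=
    (le_centralizer N).trans (centralizer_le inf_le_right)
  exact centralizer_eq_top_iff_subset.mp (top_le_iff.mp (h ▸ sup_le hM hN))

theorem exists_isCoatom_ne_of_not_isCyclic [Finite G] (h : ¬IsCyclic G) :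
    ∃ M N : Subgroup G, IsCoatom M ∧ IsCoatom N ∧ M ≠ N := by
  have hzpowers : ∀ x : G, ∃ M : Subgroup G, IsCoatom M ∧ x ∈ M := fun x =>
    ((eq_top_or_exists_le_coatom (zpowers x)).resolve_left fun hx =>
      h ⟨x, (eq_top_iff' _).mp hx⟩).imp fun M hM => ⟨hM.1, zpowers_le.mp hM.2⟩
  obtain ⟨M, hM, -⟩ := hzpowers 1
  obtain ⟨x, hx⟩ := (SetLike.lt_iff_le_and_exists.mp hM.lt_top).2
  obtain ⟨N, hN, hxN⟩ := hzpowers x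
  exact ⟨M, N, hM, hN, fun hMN => hx.2 (hMN ▸ hxN)⟩

theorem Subgroup.isSimpleGroup_quotient_of_isCoatom {M : Subgroup G} [M.Normal]
    (hM : IsCoatom M) : IsSimpleGroup (G ⧸ M) where
  exists_pair_ne := QuotientGroup.nontrivial_iff.mpr hM.1 |>.exists_pair_ne
  eq_bot_or_eq_top_of_normal K _ := by
    have hle : M ≤ K.comap (QuotientGroup.mk' M) := by
      intro x hx
      rw [mem_comap, QuotientGroup.mk'_apply, (QuotientGroup.eq_one_iff x).mpr hx]
      exact K.one_mem
    refine (hM.le_iff.mp hle).symm.imp (fun hK => ?_) (fun hK => ?_) <;>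
      apply comap_injective (QuotientGroup.mk'_surjective M)
    · rw [hK, MonoidHom.comap_bot, QuotientGroup.ker_mk']
    · rw [hK, comap_top]

section PGroup

variable {p : ℕ} [Fact p.Prime] [Finite G] (hG : IsPGroup p G) {M : Subgroup G}
include hG

theorem IsPGroup.normal_of_isCoatom (hM : IsCoatom M) : M.Normal :=
  have := hG.isNilpotent
  NormalizerCondition.normal_of_coatom M Group.normalizerCondition_of_isNilpotent hM

theorem IsPGroup.index_eq_of_isCoatom (hM : IsCoatom M) : M.index = p := by
  have := hG.normal_of_isCoatom hM
  have := isSimpleGroup_quotient_of_isCoatom hM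
  have := (hG.to_quotient M).isNilpotent
  have hprime : (Nat.card (G ⧸ M)).Prime := IsSimpleGroup.prime_card
  rw [index_eq_card]
  obtain h | h := (hG.to_quotient M).card_eq_or_dvd
  · exact absurd h hprime.ne_one
  · exact ((Nat.prime_dvd_prime_iff_eq Fact.out hprime).mp h).symm

theorem IsPGroup.pow_mem_of_isCoatom (hM : IsCoatom M) (x : G) : x ^ p ∈ M := by
  have := hG.normal_of_isCoatom hM
  simpa only [hG.index_eq_of_isCoatom hM] using M.pow_index_mem x

theorem IsPGroup.commutator_le_of_isCoatom (hM : IsCoatom M) : commutator G ≤ M := by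
  have := hG.normal_of_isCoatom hM
  have := isSimpleGroup_quotient_of_isCoatom hM
  have := (hG.to_quotient M).isNilpotent
  exact Normal.quotient_commutative_iff_commutator_le.mp inferInstance

end PGroup

section UniqueSubgroupOfPrimeOrder

variable {p : ℕ} {C : Subgroup G} (hC : ∀ H : Subgroup G, Nat.card H = p → H = C)
include hC

theorem mem_of_pow_prime_eq_one [Fact p.Prime] {x : G} (hx : x ^ p = 1) : x ∈ C := by
  obtain rfl | hx1 := eq_or_ne x 1
  · exact C.one_mem
  · rw [← hC (zpowers x) (by rw [Nat.card_zpowers, orderOf_eq_prime hx hx1])]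
    exact mem_zpowers x

theorem le_of_ne_bot_of_isPGroup [Fact p.Prime] [Finite G] (hG : IsPGroup p G) {H : Subgroup G}
    (hH : H ≠ ⊥) : C ≤ H := by
  have hp : p ∣ Nat.card H :=
    ((hG.to_subgroup H).card_eq_or_dvd).resolve_left fun h => hH (card_eq_one.mp h)
  obtain ⟨x, hx⟩ := exists_prime_orderOf_dvd_card' p hp
  rw [← hC (zpowers (x : G)) (by rw [Nat.card_zpowers, orderOf_coe, hx])]
  exact zpowers_le.mpr x.2

theorem existsUnique_subgroupOf_card_eq (hCp : Nat.card C = p) {H : Subgroup G}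
    (hCH : C ≤ H) : ∃! K : Subgroup H, Nat.card K = p := by
  refine ⟨C.subgroupOf H, hCp ▸ Nat.card_congr (subgroupOfEquivOfLe hCH).toEquiv,
    fun K hK => ?_⟩
  apply map_injective H.subtype_injective
  rw [subgroupOf_map_subtype, inf_eq_left.mpr hCH]
  exact hC _ (by rwa [card_map_of_injective H.subtype_injective])

end UniqueSubgroupOfPrimeOrder

theorem IsPGroup.isCyclic_of_forall_ne_top {p : ℕ} [Fact p.Prime] (hodd : Odd p) [Finite G]
    (hG : IsPGroup p G) {C : Subgroup G} (hCp : Nat.card C = p)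
    (hC : ∀ H : Subgroup G, Nat.card H = p → H = C)
    (hsub : ∀ H : Subgroup G, H ≠ ⊤ → IsCyclic H) : IsCyclic G := by
  by_contra hnc
  obtain ⟨M, N, hM, hN, hMN⟩ := exists_isCoatom_ne_of_not_isCyclic hnc
  have := hsub M hM.1
  have := hsub N hN.1
  have hcenter : M ⊓ N ≤ center G := inf_le_center_of_sup_eq_top (hM.sup_eq_top_of_ne hN hMN)
  have hpow (x : G) : x ^ p ∈ M ⊓ N :=
    ⟨hG.pow_mem_of_isCoatom hM x, hG.pow_mem_of_isCoatom hN x⟩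
  have hcomm (x y z : G) : Commute ⁅x, y⁆ z := by
    have hle := le_inf (hG.commutator_le_of_isCoatom hM) (hG.commutator_le_of_isCoatom hN)
    have hxy := hle (commutator_mem_commutator (mem_top x) (mem_top y))
    exact (mem_center_iff.mp (hcenter hxy) z).symm
  let φ : G →* G := MonoidHom.mk' (· ^ p) fun a b =>
    mul_pow_of_odd hodd (hcomm b a a) (hcomm b a b) (mem_center_iff.mp (hcenter (hpow b)) a).symm
  have hker : Nat.card φ.ker ≤ p :=
    hCp ▸ card_le_of_le fun x hx => mem_of_pow_prime_eq_one hC hx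
  have hrange : Nat.card φ.range ≤ Nat.card (M ⊓ N : Subgroup G) := by
    refine card_le_of_le ?_
    rintro _ ⟨x, rfl⟩
    exact hpow x
  have hindex : p < (M ⊓ N).index := hG.index_eq_of_isCoatom hM ▸
    index_strictAnti (inf_lt_left.mpr fun h => hMN ((hM.le_iff_eq hN.1).mp h).symm)
  apply lt_irrefl (Nat.card G)
  calc Nat.card G = Nat.card φ.ker * Nat.card φ.range := by rw [← index_ker, card_mul_index]
    _ ≤ p * Nat.card (M ⊓ N : Subgroup G) := Nat.mul_le_mul hker hrange
    _ < Nat.card (M ⊓ N : Subgroup G) * (M ⊓ N).index := by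
        rw [mul_comm]; exact Nat.mul_lt_mul_of_pos_left hindex Nat.card_pos
    _ = Nat.card G := card_mul_index _

theorem IsPGroup.isCyclic_of_existsUnique_card_eq {p : ℕ} [Fact p.Prime] (hodd : Odd p)
    [Finite G] (hG : IsPGroup p G) (hu : ∃! H : Subgroup G, Nat.card H = p) : IsCyclic G := by
  induction h : Nat.card G using Nat.strong_induction_on generalizing G with
  | _ n ih =>
    obtain ⟨C, hCp, hC⟩ := hu
    refine hG.isCyclic_of_forall_ne_top hodd hCp hC fun H hH => ?_
    obtain rfl | hbot := eq_or_ne H ⊥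
    · infer_instance
    have hlt : Nat.card H < n :=
      h ▸ (card_le_card_group H).lt_of_ne fun he => hH (eq_top_of_card_eq H he)
    exact ih _ hlt (hG.to_subgroup H)
      (existsUnique_subgroupOf_card_eq hC hCp (le_of_ne_bot_of_isPGroup hC hG hbot)) rfl

end

/-- A finite `p`-group, `p` an odd prime, with a unique subgroup of order `p` is cyclic. -/
theorem stmt12 (p : ℕ) (hp : p.Prime) (hodd : Odd p)
    (P : Type*) [Group P] [Finite P] (hP : IsPGroup p P)
    (huniq : ∃! H : Subgroup P, Nat.card H = p) :
    IsCyclic P :=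
  have := Fact.mk hp
  hP.isCyclic_of_existsUnique_card_eq hodd huniq
end
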